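/- Let A be an n×n real symmetric positive definite matrix, let v_1, …, v_k ∈ ℝ^n be orthonormal eigenvectors of A with corresponding (necessarily positive) eigenvalues λ_1, …, λ_k, and let V be the n×k matrix with columns v_1, …, v_k. Then the limited memory preconditioner P_k = (I − V(VᵀAV)⁻¹VᵀA)(I − AV(VᵀAV)⁻¹Vᵀ) + V(VᵀAV)⁻¹Vᵀ equals the spectral-LMP P_k^{sp} = I − Σ_{i=1}^{k} (1 − λ_i⁻¹) v_i v_iᵀ. -/

import Mathlib

/-!
With `Λ = diagonal λ`, the eigen-relations say `A V = V Λ`, and symmetry of `A` gives `Vᵀ A = Λ Vᵀ`.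
As `Vᵀ V = 1`, this makes `Vᵀ A V = Λ`, and both oblique projections `V (VᵀAV)⁻¹ VᵀA` and
`AV (VᵀAV)⁻¹ Vᵀ` collapse to the orthogonal projection `V Vᵀ`. Hence
`P_k = (1 - V Vᵀ)² + V Λ⁻¹ Vᵀ = 1 - V Vᵀ + V Λ⁻¹ Vᵀ`, which is the spectral-LMP written with
outer products. Positive definiteness makes the `λ i` positive, so `Λ` is invertible.
-/

open Matrix

namespace Matrix

variable {m k α : Type*}

noncomputable def limitedMemoryPreconditioner [Fintype m] [Fintype k] [DecidableEq m]
    [DecidableEq k] [CommRing α] (A : Matrix m m α) (S : Matrix m k α) : Matrix m m α :=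
  (1 - S * (Sᵀ * A * S)⁻¹ * Sᵀ * A) * (1 - A * S * (Sᵀ * A * S)⁻¹ * Sᵀ) + S * (Sᵀ * A * S)⁻¹ * Sᵀ

theorem limitedMemoryPreconditioner_eq_of_mul_eq_mul [Fintype m] [Fintype k] [DecidableEq m]
    [DecidableEq k] [CommRing α] {A : Matrix m m α} {S : Matrix m k α} {D : Matrix k k α}
    (hA : A.IsSymm) (hS : Sᵀ * S = 1) (hD : D.IsSymm) (hdet : IsUnit D.det)
    (hAS : A * S = S * D) :
    limitedMemoryPreconditioner A S = 1 - S * Sᵀ + S * D⁻¹ * Sᵀ := by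
  have hSA : Sᵀ * A = D * Sᵀ := by
    simpa only [transpose_mul, hA.eq, hD.eq] using congrArg transpose hAS
  have hSAS : Sᵀ * A * S = D := by rw [hSA, Matrix.mul_assoc, hS, Matrix.mul_one]
  have hleft : S * D⁻¹ * Sᵀ * A = S * Sᵀ := by
    rw [Matrix.mul_assoc _ Sᵀ, hSA, ← Matrix.mul_assoc, Matrix.mul_assoc S, nonsing_inv_mul _ hdet,
      Matrix.mul_one]
  have hright : A * S * D⁻¹ * Sᵀ = S * Sᵀ := by
    rw [hAS, Matrix.mul_assoc S D, mul_nonsing_inv _ hdet, Matrix.mul_one]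
  have hP : IsIdempotentElem (S * Sᵀ) := by
    rw [IsIdempotentElem, Matrix.mul_assoc, ← Matrix.mul_assoc Sᵀ, hS, Matrix.one_mul]
  rw [limitedMemoryPreconditioner, hSAS, hleft, hright, hP.one_sub.eq]

theorem transpose_of_mul_diagonal_mul_of [Fintype k] [DecidableEq k] [CommSemiring α]
    (v : k → m → α) (d : k → α) :
    (of v)ᵀ * diagonal d * of v = ∑ i, d i • vecMulVec (v i) (v i) := by
  ext r s
  simp [mul_apply, sum_apply, vecMulVec_apply, diagonal_apply, mul_comm, mul_left_comm]

theorem transpose_of_mul_of [Fintype k] [DecidableEq k] [CommSemiring α] (v : k → m → α) :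
    (of v)ᵀ * of v = ∑ i, vecMulVec (v i) (v i) := by
  simpa using transpose_of_mul_diagonal_mul_of v 1

theorem mul_transpose_of_eq_of_mulVec_eq_smul [Fintype m] [Fintype k] [DecidableEq k]
    [CommSemiring α] {A : Matrix m m α} {v : k → m → α} {d : k → α}
    (h : ∀ i, A *ᵥ v i = d i • v i) :
    A * (of v)ᵀ = (of v)ᵀ * diagonal d := by
  ext r j
  simpa [mul_apply, diagonal_apply, mulVec, dotProduct, mul_comm] using congrFun (h j) r

theorem of_mul_transpose_of_eq_one [Fintype m] [DecidableEq k] [CommSemiring α]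
    {v : k → m → α} (h : ∀ i j, v i ⬝ᵥ v j = if i = j then 1 else 0) : of v * (of v)ᵀ = 1 :=
  ext h

theorem PosDef.pos_of_mulVec_eq_smul [Fintype m] {A : Matrix m m ℝ} (hA : A.PosDef)
    {x : m → ℝ} {μ : ℝ} (hx : x ≠ 0) (h : A *ᵥ x = μ • x) : 0 < μ := by
  have hquad := hA.dotProduct_mulVec_pos hx
  rw [h, dotProduct_smul, star_trivial, smul_eq_mul] at hquad
  exact (mul_pos_iff_of_pos_right (dotProduct_self_star_pos_iff.mpr hx)).mp (by simpa using hquad)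

end Matrix

theorem stmt_8_general (n k : ℕ)
    (A : Matrix (Fin n) (Fin n) ℝ) (hA : A.PosDef)
    (v : Fin k → Fin n → ℝ) (lam : Fin k → ℝ)
    (horth : ∀ i j : Fin k, v i ⬝ᵥ v j = if i = j then (1 : ℝ) else 0)
    (heig : ∀ i : Fin k, A *ᵥ v i = lam i • v i)
    (V : Matrix (Fin n) (Fin k) ℝ)
    (hV : V = Matrix.of (fun r j => v j r)) :
    (1 - V * (Vᵀ * A * V)⁻¹ * Vᵀ * A) * (1 - A * V * (Vᵀ * A * V)⁻¹ * Vᵀ) +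
      V * (Vᵀ * A * V)⁻¹ * Vᵀ =
    1 - ∑ i : Fin k, (1 - (lam i)⁻¹) • vecMulVec (v i) (v i) := by
  obtain rfl : V = (of v)ᵀ := hV
  have hlam (i : Fin k) : lam i ≠ 0 := by
    refine (hA.pos_of_mulVec_eq_smul (fun hv => ?_) (heig i)).ne'
    simpa [hv] using horth i i
  have hinv : diagonal lam⁻¹ * diagonal lam = 1 := by
    rw [diagonal_mul_diagonal, ← diagonal_one]
    exact congrArg diagonal (funext fun i => inv_mul_cancel₀ (hlam i))
  change limitedMemoryPreconditioner A (of v)ᵀ = _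
  rw [limitedMemoryPreconditioner_eq_of_mul_eq_mul (isHermitian_iff_isSymm.mp hA.1)
    (by rw [transpose_transpose]; exact of_mul_transpose_of_eq_one horth) (isSymm_diagonal lam)
    (isUnit_det_of_left_inverse hinv) (mul_transpose_of_eq_of_mulVec_eq_smul heig),
    inv_eq_left_inv hinv, transpose_transpose, transpose_of_mul_of,
    transpose_of_mul_diagonal_mul_of]
  simp only [Pi.inv_apply, sub_smul, one_smul, Finset.sum_sub_distrib]
  abel

theorem stmt_8 (n k : ℕ) (hk : k ≤ n)
    (A : Matrix (Fin n) (Fin n) ℝ) (hA : A.PosDef)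
    (v : Fin k → Fin n → ℝ) (lam : Fin k → ℝ)
    (horth : ∀ i j : Fin k, v i ⬝ᵥ v j = if i = j then (1 : ℝ) else 0)
    (heig : ∀ i : Fin k, A *ᵥ v i = lam i • v i)
    (V : Matrix (Fin n) (Fin k) ℝ)
    (hV : V = Matrix.of (fun r j => v j r)) :
    (1 - V * (Vᵀ * A * V)⁻¹ * Vᵀ * A) * (1 - A * V * (Vᵀ * A * V)⁻¹ * Vᵀ) +
      V * (Vᵀ * A * V)⁻¹ * Vᵀ =
    1 - ∑ i : Fin k, (1 - (lam i)⁻¹) • vecMulVec (v i) (v i) :=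
  stmt_8_general n k A hA v lam horth heig V hV
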